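/- arXiv:1606.00858 — 2 statements merged into one kernel-verified Lean document; each statement's English description precedes it below -/
import Mathlib

section
/- For fixed integers n, m ≥ 0 and threshold K, the function g(p,q) = Σ_{k+l < K} Bi(k; n, 1−p) Bi(l; m, 1−q) satisfies: if K ≥ 1 and n + m ≥ K, then g is strictly increasing in p on (0,1) whenever n ≥ 1, i.e., p < p' implies g(p,q) < g(p',q) for all q ∈ (0,1). -/
/-!
Swapping the order of summation writes the sum as `∑_{l < K} P(Y = l) · P(X < K - l)` with
`X ∼ Bin(n, 1 - p)`, `Y ∼ Bin(m, 1 - q)`. Each binomial distribution function `r ↦ P(Bin(n, r) < j)`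
is antitone in the success probability `r`, with derivative `-n · P(Bin(n - 1, r) = j - 1)`; this is
strictly negative on `(0, 1)` when `1 ≤ j ≤ n`. Since `K ≤ n + m`, the term
`l = K - min K n` has `P(Y = l) > 0` and `1 ≤ K - l ≤ n`, so it increases strictly in `p`.
-/

/-- Binomial probability mass function. -/
noncomputable def Bi (k n : ℕ) (p : ℝ) : ℝ :=
  (n.choose k : ℝ) * p ^ k * (1 - p) ^ (n - k)

open Finset Set Polynomial

lemma Bi_eq_eval_bernsteinPolynomial (k n : ℕ) :
    Bi k n = fun r => (bernsteinPolynomial ℝ n k).eval r := by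
  ext r
  simp [Bi, bernsteinPolynomial]

lemma Bi_nonneg {k n : ℕ} {r : ℝ} (h0 : 0 ≤ r) (h1 : r ≤ 1) : 0 ≤ Bi k n r := by
  have : 0 ≤ 1 - r := by linarith
  unfold Bi
  positivity

lemma Bi_pos {k n : ℕ} {r : ℝ} (hk : k ≤ n) (h0 : 0 < r) (h1 : r < 1) : 0 < Bi k n r := by
  have : 0 < 1 - r := by linarith
  have : (0 : ℝ) < n.choose k := mod_cast Nat.choose_pos hk
  unfold Bi
  positivity

lemma hasDerivAt_Bi_zero (n : ℕ) (r : ℝ) :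
    HasDerivAt (Bi 0 (n + 1)) (-(n + 1) * Bi 0 n r) r := by
  simpa [Bi_eq_eval_bernsteinPolynomial, bernsteinPolynomial.derivative_zero] using
    (bernsteinPolynomial ℝ (n + 1) 0).hasDerivAt r

lemma hasDerivAt_Bi_succ (k n : ℕ) (r : ℝ) :
    HasDerivAt (Bi (k + 1) (n + 1)) ((n + 1) * (Bi k n r - Bi (k + 1) n r)) r := by
  simpa [Bi_eq_eval_bernsteinPolynomial, bernsteinPolynomial.derivative_succ] using
    (bernsteinPolynomial ℝ (n + 1) (k + 1)).hasDerivAt r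

lemma hasDerivAt_sum_range_Bi (n j : ℕ) (r : ℝ) :
    HasDerivAt (fun r => ∑ k ∈ range (j + 1), Bi k (n + 1) r) (-(n + 1) * Bi j n r) r := by
  induction j with
  | zero => simpa using hasDerivAt_Bi_zero n r
  | succ j ih =>
    simp only [Finset.sum_range_succ _ (j + 1)]
    exact (ih.fun_add (hasDerivAt_Bi_succ j n r)).congr_deriv (by ring)

lemma antitoneOn_sum_range_Bi (n j : ℕ) :
    AntitoneOn (fun r => ∑ k ∈ range j, Bi k (n + 1) r) (Icc 0 1) := by
  cases j with
  | zero => simp [AntitoneOn]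
  | succ j =>
    have hderiv := hasDerivAt_sum_range_Bi n j
    refine antitoneOn_of_deriv_nonpos (convex_Icc 0 1)
      (fun r _ => (hderiv r).continuousAt.continuousWithinAt)
      (fun r _ => (hderiv r).differentiableAt.differentiableWithinAt) fun r hr => ?_
    rw [interior_Icc] at hr
    rw [(hderiv r).deriv]
    have := Bi_nonneg (k := j) (n := n) hr.1.le hr.2.le
    nlinarith

lemma strictAntiOn_sum_range_Bi {n j : ℕ} (hj0 : 0 < j) (hj : j ≤ n + 1) :
    StrictAntiOn (fun r => ∑ k ∈ range j, Bi k (n + 1) r) (Icc 0 1) := by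
  obtain ⟨i, rfl⟩ : ∃ i, j = i + 1 := ⟨j - 1, by omega⟩
  have hderiv := hasDerivAt_sum_range_Bi n i
  refine strictAntiOn_of_deriv_neg (convex_Icc 0 1)
    (fun r _ => (hderiv r).continuousAt.continuousWithinAt) fun r hr => ?_
  rw [interior_Icc] at hr
  rw [(hderiv r).deriv]
  have := Bi_pos (by omega : i ≤ n) hr.1 hr.2
  nlinarith

/-- Strict monotonicity in p of the binomial tail sum when the event is nontrivial. -/
theorem binomial_tail_sum_strict_mono (n m K : ℕ)
    (hK : 1 ≤ K) (hnm : K ≤ n + m) (hn : 1 ≤ n)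
    (p p' q : ℝ) (hp : p ∈ Set.Ioo (0 : ℝ) 1) (hp' : p' ∈ Set.Ioo (0 : ℝ) 1)
    (hq : q ∈ Set.Ioo (0 : ℝ) 1) (hpp : p < p') :
    (∑ k ∈ Finset.range K, ∑ l ∈ Finset.range (K - k),
        Bi k n (1 - p) * Bi l m (1 - q)) <
    (∑ k ∈ Finset.range K, ∑ l ∈ Finset.range (K - k),
        Bi k n (1 - p') * Bi l m (1 - q)) := by
  obtain ⟨n, rfl⟩ : ∃ n', n = n' + 1 := ⟨n - 1, by omega⟩
  have hswap : ∀ r, ∑ k ∈ range K, ∑ l ∈ range (K - k), Bi k (n + 1) r * Bi l m (1 - q) =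
      ∑ l ∈ range K, Bi l m (1 - q) * ∑ k ∈ range (K - l), Bi k (n + 1) r := fun r => by
    simp_rw [mul_sum]
    exact sum_comm' (fun k l => by simp only [Finset.mem_range]; omega) |>.trans
      (sum_congr rfl fun _ _ => sum_congr rfl fun _ _ => mul_comm _ _)
  have hr : 1 - p ∈ Icc (0 : ℝ) 1 := ⟨by linarith [hp.2], by linarith [hp.1]⟩
  have hr' : 1 - p' ∈ Icc (0 : ℝ) 1 := ⟨by linarith [hp'.2], by linarith [hp'.1]⟩
  have hs : 0 < 1 - q ∧ 1 - q < 1 := ⟨by linarith [hq.2], by linarith [hq.1]⟩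
  rw [hswap, hswap]
  refine sum_lt_sum (fun l _ => ?_) ⟨K - min K (n + 1), by simp only [Finset.mem_range]; omega, ?_⟩
  · exact mul_le_mul_of_nonneg_left (antitoneOn_sum_range_Bi n _ hr' hr (by linarith))
      (Bi_nonneg hs.1.le hs.2.le)
  · exact mul_lt_mul_of_pos_left
      (strictAntiOn_sum_range_Bi (by omega) (by omega) hr' hr (by linarith))
      (Bi_pos (by omega) hs.1 hs.2)
end

section
/- Nonincreasing trajectories: For the ODE dμ/dt = F(μ) − μ on [0,1]^4 with μ(0) = 1, where F is continuous, monotone, and Lipschitz with F(1) ≤ 1, the solution μ(t) is componentwise nonincreasing in t and satisfies μ(t) ≥ F(μ(t)) componentwise for all t ≥ 0. -/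
/-! The field `G μ = F μ - μ` is cooperative: by monotonicity of `F`, a coordinate of `G` can only
grow through the coordinates in which its argument grew, and the Lipschitz bound controls that
growth. For such fields sub- and supersolutions stay ordered, as Grönwall's inequality applied to
`∑ᵢ (gᵢ - vᵢ)⁺` shows. Since `G 1 ≤ 0`, the constant `1` is a supersolution, so `μ t ≤ 1 = μ 0`;
comparing `μ` with its time shift `μ (· + h)` then makes `μ` nonincreasing, and a nonincreasing
solution has `μ' = F μ - μ ≤ 0`. -/

open Set Filter Topology

open scoped NNReal

theorem HasDerivAt.nonpos_of_antitoneOn_Ici {ι : Type*} {x : ℝ → ι → ℝ} {x' : ι → ℝ} {a t : ℝ}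
    (hd : HasDerivAt x x' t) (hx : AntitoneOn x (Ici a)) (ht : a ≤ t) : x' ≤ 0 := by
  have hacc : AccPt t (𝓟 (Ici t)) := accPt_iff_frequently_nhdsNE.2 <|
    ((eventually_mem_nhdsWithin (a := t) (s := Ioi t)).frequently.filter_mono
      (nhdsGT_le_nhdsNE t)).mono fun _ ↦ mem_Ici_of_Ioi
  intro i
  exact (hasDerivAt_pi.1 hd i).hasDerivWithinAt.nonpos_of_antitoneOn hacc
    fun p hp q hq hpq ↦ hx (ht.trans hp) (ht.trans hq) hpq i

section

variable {ι : Type*} [Fintype ι]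

theorem eventually_slope_sum_lt {f : ι → ℝ → ℝ} {b : ι → ℝ} {t r : ℝ}
    (hf : ∀ i, ∀ r > b i, ∀ᶠ z in 𝓝[>] t, slope (f i) t z < r) (hr : ∑ i, b i < r) :
    ∀ᶠ z in 𝓝[>] t, slope (fun z ↦ ∑ i, f i z) t z < r := by
  set δ := (r - ∑ i, b i) / (Fintype.card ι + 1)
  have hδ : 0 < δ := div_pos (sub_pos.2 hr) (by positivity)
  filter_upwards [eventually_all.2 fun i ↦ hf i (b i + δ) (lt_add_of_pos_right _ hδ)] with z hz
  have hsum : slope (fun z ↦ ∑ i, f i z) t z = ∑ i, slope (f i) t z := by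
    simp only [slope_def_field, ← Finset.sum_div, Finset.sum_sub_distrib]
  calc slope (fun z ↦ ∑ i, f i z) t z
      ≤ ∑ i, (b i + δ) := hsum ▸ Finset.sum_le_sum fun i _ ↦ (hz i).le
    _ = ∑ i, b i + Fintype.card ι * δ := by simp [Finset.sum_add_distrib]
    _ < ∑ i, b i + (Fintype.card ι + 1) * δ := by gcongr; linarith
    _ = r := by simp only [δ]; field_simp; ring

theorem HasDerivAt.eventually_slope_posPart_lt {d : ℝ → ℝ} {d' b t : ℝ} (hd : HasDerivAt d d' t)
    (hb : 0 ≤ b) (hd' : 0 ≤ d t → d' ≤ b) :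
    ∀ r > b, ∀ᶠ z in 𝓝[>] t, slope (fun z ↦ (d z)⁺) t z < r := by
  intro r hr
  rcases lt_or_ge (d t) 0 with hneg | hnonneg
  · filter_upwards [nhdsWithin_le_nhds (hd.continuousAt.eventually_lt continuousAt_const hneg)]
      with z hz
    simpa [slope_def_field, posPart_of_nonpos hz.le, posPart_of_nonpos hneg.le] using
      hb.trans_lt hr
  · filter_upwards [hd.hasDerivWithinAt.limsup_slope_le' (lt_irrefl t)
      ((hd' hnonneg).trans_lt hr), self_mem_nhdsWithin] with z hz (hzt : t < z)
    rw [slope_def_field, posPart_of_nonneg hnonneg]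
    rcases le_total (d z) 0 with hz' | hz'
    · rw [posPart_of_nonpos hz']
      exact (div_nonpos_of_nonpos_of_nonneg (by linarith) (sub_pos.2 hzt).le).trans_lt
        (hb.trans_lt hr)
    · rwa [posPart_of_nonneg hz', ← slope_def_field]

theorem dist_sup_le_sum_posPart (x y : ι → ℝ) : dist (x ⊔ y) y ≤ ∑ j, (x j - y j)⁺ := by
  refine (dist_pi_le_iff (Finset.sum_nonneg fun j _ ↦ posPart_nonneg _)).2 fun j ↦ ?_
  have hj : (x ⊔ y) j - y j = (x j - y j)⁺ := by
    show x j ⊔ y j - y j = (x j - y j) ⊔ 0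
    rw [← max_sub_sub_right, sub_self]
  rw [Real.dist_eq, hj, abs_of_nonneg (posPart_nonneg _)]
  exact Finset.single_le_sum (f := fun j ↦ (x j - y j)⁺) (fun j _ ↦ posPart_nonneg _)
    (Finset.mem_univ j)

/-- Kamke's quasi-monotonicity condition for `ẋ = G x`, in a quantitative one-sided Lipschitz
form. -/
def QuasiMonotoneLipschitz (G : (ι → ℝ) → ι → ℝ) (K : ℝ≥0) : Prop :=
  ∀ x y i, y i ≤ x i → G x i - G y i ≤ K * ∑ j, (x j - y j)⁺

theorem Monotone.quasiMonotoneLipschitz_sub_id {F : (ι → ℝ) → ι → ℝ} {L : ℝ≥0}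
    (hmono : Monotone F) (hlip : LipschitzWith L F) :
    QuasiMonotoneLipschitz (fun x ↦ F x - x) L := by
  intro x y i hyx
  calc (F x - x) i - (F y - y) i ≤ F (x ⊔ y) i - F y i := by
        have := hmono (le_sup_left : x ≤ x ⊔ y) i
        simp only [Pi.sub_apply]; linarith
    _ ≤ dist (F (x ⊔ y) i) (F y i) := (Real.dist_eq _ _).symm ▸ le_abs_self _
    _ ≤ dist (F (x ⊔ y)) (F y) := dist_le_pi_dist _ _ i
    _ ≤ L * dist (x ⊔ y) y := hlip.dist_le_mul _ _
    _ ≤ L * ∑ j, (x j - y j)⁺ := by gcongr; exact dist_sup_le_sum_posPart x y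

namespace QuasiMonotoneLipschitz

variable {G : (ι → ℝ) → ι → ℝ} {K : ℝ≥0}

theorem le_of_le_of_hasDerivAt (hG : QuasiMonotoneLipschitz G K)
    {g v g' v' : ℝ → ι → ℝ} {a : ℝ}
    (hg : ∀ t ≥ a, HasDerivAt g (g' t) t) (hv : ∀ t ≥ a, HasDerivAt v (v' t) t)
    (hg' : ∀ t ≥ a, g' t ≤ G (g t)) (hv' : ∀ t ≥ a, G (v t) ≤ v' t) (ha : g a ≤ v a) :
    ∀ t ≥ a, g t ≤ v t := by
  intro b hb
  set φ : ℝ → ℝ := fun t ↦ ∑ i, (g t i - v t i)⁺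
  have hd : ∀ t ≥ a, ∀ i, HasDerivAt (fun t ↦ g t i - v t i) (g' t i - v' t i) t := fun t ht i ↦
    (hasDerivAt_pi.1 (hg t ht) i).sub (hasDerivAt_pi.1 (hv t ht) i)
  have hφ_cont : ContinuousOn φ (Icc a b) := continuousOn_finsetSum _ fun i _ ↦
    continuousOn_of_forall_continuousAt fun t ht ↦
      (hd t ht.1 i).continuousAt.sup continuousAt_const
  have hφ_slope : ∀ t ∈ Ico a b, ∀ r, Fintype.card ι * K * φ t < r →
      ∃ᶠ z in 𝓝[>] t, (z - t)⁻¹ * (φ z - φ t) < r := by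
    intro t ht r hr
    refine Eventually.frequently (eventually_slope_sum_lt (b := fun _ ↦ K * φ t)
      (fun i ↦ (hd t ht.1 i).eventually_slope_posPart_lt ?_ fun hi ↦ ?_) ?_)
    · exact mul_nonneg K.coe_nonneg (Finset.sum_nonneg fun j _ ↦ posPart_nonneg _)
    · linarith [hG (g t) (v t) i (sub_nonneg.1 hi), hg' t ht.1 i, hv' t ht.1 i]
    · simpa [mul_assoc] using hr
  have hφ_le := le_gronwallBound_of_liminf_deriv_right_le hφ_cont hφ_slope
    (le_of_eq (Finset.sum_eq_zero fun i _ ↦ posPart_of_nonpos (sub_nonpos.2 (ha i))))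
    (fun t _ ↦ (add_zero _).ge) b ⟨hb, le_rfl⟩
  rw [gronwallBound_ε0_δ0] at hφ_le
  intro i
  have := (Finset.single_le_sum (f := fun j ↦ (g b j - v b j)⁺) (fun j _ ↦ posPart_nonneg _)
    (Finset.mem_univ i)).trans hφ_le
  exact sub_nonpos.1 (posPart_nonpos.1 this)

theorem antitoneOn_of_nonpos (hG : QuasiMonotoneLipschitz G K) {x : ℝ → ι → ℝ}
    (hx : ∀ t ≥ 0, HasDerivAt x (G (x t)) t) (h0 : G (x 0) ≤ 0) : AntitoneOn x (Ici 0) := by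
  have hle : ∀ t ≥ 0, x t ≤ x 0 :=
    hG.le_of_le_of_hasDerivAt hx (fun t _ ↦ hasDerivAt_const t (x 0)) (fun _ _ ↦ le_rfl)
      (fun _ _ ↦ h0) le_rfl
  intro s (hs : 0 ≤ s) t _ hst
  have hshift := hG.le_of_le_of_hasDerivAt (g := fun τ ↦ x (τ + (t - s)))
    (fun τ hτ ↦ (hx _ (by linarith)).comp_add_const τ (t - s)) hx (fun _ _ ↦ le_rfl)
    (fun _ _ ↦ le_rfl) (by simpa using hle (t - s) (sub_nonneg.2 hst)) s hs
  simpa using hshift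

end QuasiMonotoneLipschitz

end

theorem cascade_ode_nonincreasing_general
    (F : (Fin 4 → ℝ) → Fin 4 → ℝ) (L : NNReal)
    (hmono : Monotone F) (hlip : LipschitzWith L F)
    (hF1 : F 1 ≤ 1)
    (μc : ℝ → Fin 4 → ℝ) (h0 : μc 0 = 1)
    (hode : ∀ t : ℝ, HasDerivAt μc (F (μc t) - μc t) t) :
    (∀ s t : ℝ, 0 ≤ s → s ≤ t → μc t ≤ μc s) ∧
    (∀ t ≥ (0 : ℝ), F (μc t) ≤ μc t) := by
  have hanti : AntitoneOn μc (Ici 0) :=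
    (hmono.quasiMonotoneLipschitz_sub_id hlip).antitoneOn_of_nonpos (fun t _ ↦ hode t)
      (by rw [h0]; exact sub_nonpos.2 hF1)
  exact ⟨fun s t hs hst ↦ hanti hs (hs.trans hst) hst,
    fun t ht ↦ sub_nonpos.1 ((hode t).nonpos_of_antitoneOn_Ici hanti ht)⟩

/-- Trajectories of μ̇ = F(μ) − μ started at 1 are componentwise nonincreasing
and remain in the region {μ : F(μ) ≤ μ}. -/
theorem cascade_ode_nonincreasing
    (F : (Fin 4 → ℝ) → Fin 4 → ℝ) (L : NNReal)
    (hcont : Continuous F) (hmono : Monotone F) (hlip : LipschitzWith L F)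
    (hmaps : Set.MapsTo F (Set.Icc (0 : Fin 4 → ℝ) 1) (Set.Icc (0 : Fin 4 → ℝ) 1))
    (hF1 : F 1 ≤ 1)
    (μc : ℝ → Fin 4 → ℝ) (h0 : μc 0 = 1)
    (hode : ∀ t : ℝ, HasDerivAt μc (F (μc t) - μc t) t) :
    (∀ s t : ℝ, 0 ≤ s → s ≤ t → μc t ≤ μc s) ∧
    (∀ t ≥ (0 : ℝ), F (μc t) ≤ μc t) :=
  cascade_ode_nonincreasing_general F L hmono hlip hF1 μc h0 hode
end
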